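/- arXiv:1003.0219 — 2 statements merged into one kernel-verified Lean document; each statement's English description precedes it below -/
import Mathlib

section
/- Let x* ∈ ℝ^N with at most K nonzero entries, and let A be an M × N random matrix with i.i.d. absolutely continuous entries, where K < M < N. Let y = A x*. Then with probability 1, x* is the unique vector x satisfying y = A x and ‖x‖_0 < M. -/
/-!
Transposing `A` is measure preserving, so its columns `a₁, …, a_N` are independent random vectors
of `ℝ^M` with i.i.d. atomless coordinates. Suppose `A x = A x*`, `x ≠ x*` and `x` is supported on
`T` with `#T < M`. If `x*_j ≠ 0` for some `j ∉ T`, then `∑ x*_i a_i = ∑_{i ∈ T} x_i a_i` lies in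
the span of the columns in `T`; otherwise `x - x*` is supported on `T` and some `a_j`, `j ∈ T`,
lies in the span of the other columns in `T`. Either way a combination `∑ c_i a_i` with `c_j ≠ 0`,
where `c` is `x*` or `e_j`, lies in the span of fewer than `M` columns other than `a_j`. Once the
other columns are fixed, this confines `a_j` to a proper affine subspace of `ℝ^M`, which lies in an
affine hyperplane and hence is null for a product of atomless measures: fixing all coordinates but
one with a nonzero coefficient leaves at most one admissible value. Only finitely many `j`, `T`
and `c` occur.
-/

open MeasureTheory Finset

/-- The number of nonzero entries of a vector (the "ℓ₀ norm"). -/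
noncomputable def sparsity {n : ℕ} (x : Fin n → ℝ) : ℕ := (Finset.univ.filter fun i => x i ≠ 0).card

theorem mem_span_image_erase_of_sum_smul_eq_zero {ι K V : Type*} [DecidableEq ι] [Field K]
    [AddCommGroup V] [Module K V] {v : ι → V} {z : ι → K} {T : Finset ι}
    (hz : ∑ i ∈ T, z i • v i = 0) {j : ι} (hjT : j ∈ T) (hzj : z j ≠ 0) :
    v j ∈ Submodule.span K (v '' ↑(T.erase j)) := by
  rw [← add_sum_erase T _ hjT, add_eq_zero_iff_eq_neg] at hz
  exact (Submodule.smul_mem_iff _ hzj).mp (hz ▸ neg_mem (Submodule.sum_mem _ fun i hi =>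
    Submodule.smul_mem _ _ (Submodule.subset_span (Set.mem_image_of_mem v hi))))

theorem sum_smul_eq_fintype_sum_smul_of_support_subset {ι K V : Type*} [Fintype ι] [Field K]
    [AddCommGroup V] [Module K V] (v : ι → V) {x : ι → K} {T : Finset ι}
    (hT : ∀ i, x i ≠ 0 → i ∈ T) : ∑ i ∈ T, x i • v i = ∑ i, x i • v i :=
  sum_subset (subset_univ T) fun i _ hi => by rw [not_imp_comm.mp (hT i) hi, zero_smul]

theorem exists_sum_smul_mem_span_of_sum_smul_eq {ι K V : Type*} [Fintype ι] [DecidableEq ι]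
    [Field K] [AddCommGroup V] [Module K V] {v : ι → V} {x y : ι → K}
    (hxy : ∑ i, x i • v i = ∑ i, y i • v i) (hne : x ≠ y) {T : Finset ι}
    (hT : ∀ i, x i ≠ 0 → i ∈ T) :
    ∃ j, ∃ S ⊆ T, j ∉ S ∧ ∃ c ∈ ({y, Pi.single j 1} : Set (ι → K)),
      c j ≠ 0 ∧ ∑ i, c i • v i ∈ Submodule.span K (v '' S) := by
  by_cases hsupp : ∃ j, y j ≠ 0 ∧ j ∉ T
  · obtain ⟨j, hyj, hjT⟩ := hsupp
    refine ⟨j, T, subset_rfl, hjT, y, Set.mem_insert y _, hyj, ?_⟩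
    rw [← hxy, ← sum_smul_eq_fintype_sum_smul_of_support_subset v hT]
    exact Submodule.sum_mem _ fun i hi =>
      Submodule.smul_mem _ _ (Submodule.subset_span (Set.mem_image_of_mem v hi))
  push Not at hsupp
  obtain ⟨j, hj⟩ := Function.ne_iff.mp hne
  have hsub : ∀ i, (x - y) i ≠ 0 → i ∈ T := fun i hi => by
    by_contra hiT
    exact hi (by simp [not_imp_comm.mp (hT i) hiT, not_imp_comm.mp (hsupp i) hiT])
  have hzero : ∑ i ∈ T, (x - y) i • v i = 0 := by
    rw [sum_smul_eq_fintype_sum_smul_of_support_subset v hsub]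
    simp only [Pi.sub_apply, sub_smul, sum_sub_distrib, hxy, sub_self]
  refine ⟨j, T.erase j, erase_subset j T, notMem_erase j T, Pi.single j 1,
    Set.mem_insert_of_mem y rfl, by simp, ?_⟩
  simpa using mem_span_image_erase_of_sum_smul_eq_zero hzero (hsub j (sub_ne_zero.mpr hj))
    (sub_ne_zero.mpr hj)

theorem Submodule.span_image_ne_top_of_card_lt {ι κ K : Type*} [Fintype κ] [Field K]
    (v : ι → κ → K) {S : Finset ι} (hS : #S < Fintype.card κ) : span K (v '' S) ≠ ⊤ := by
  classical
  intro htop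
  have hrank := finrank_span_finset_le_card (R := K) (S.image v)
  rw [coe_image, Set.finrank, htop, finrank_top, Module.finrank_fintype_fun_eq_card] at hrank
  exact (hrank.trans card_image_le).not_gt hS

theorem measurableSet_setOf_mem_span {𝕜 X E ι : Type*} [NontriviallyNormedField 𝕜]
    [CompleteSpace 𝕜] [TopologicalSpace X] [MeasurableSpace X] [OpensMeasurableSpace X]
    [NormedAddCommGroup E] [NormedSpace 𝕜 E] [FiniteDimensional 𝕜 E] [Finite ι]
    {f : X → ι → E} {g : X → E} (hf : Continuous f) (hg : Continuous g) :
    MeasurableSet {x | g x ∈ Submodule.span 𝕜 (Set.range (f x))} := by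
  -- The span is that of a linearly independent subfamily, and for such a subfamily membership
  -- of `g x` is the failure of linear independence once `g x` is adjoined.
  have hbasis : {x | g x ∈ Submodule.span 𝕜 (Set.range (f x))} = ⋃ s : Set ι,
      {x | LinearIndependent 𝕜 (fun i : s => f x i)} \
        {x | LinearIndependent 𝕜 (fun o => Option.casesOn' o (g x) (fun i : s => f x i))} := by
    ext x
    simp only [Set.mem_ofPred_eq, Set.mem_iUnion, Set.mem_sdiff, linearIndependent_option',
      not_and, not_not]
    constructor
    · intro hx
      obtain ⟨b, -, -, hspan, hb⟩ :=
        exists_linearIndepOn_extension (linearIndepOn_empty 𝕜 (f x)) (Set.empty_subset Set.univ)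
      refine ⟨b, hb, fun _ => ?_⟩
      rw [← Set.image_eq_range]
      exact Submodule.span_le.mpr (Set.image_univ ▸ hspan) hx
    · rintro ⟨s, hs, hx⟩
      exact Submodule.span_mono (Set.range_comp_subset_range _ _) (hx hs)
  rw [hbasis]
  refine MeasurableSet.iUnion fun s => (IsOpen.measurableSet ?_).diff (IsOpen.measurableSet ?_)
  · exact isOpen_setOfPred_linearIndependent.preimage (by fun_prop)
  · refine isOpen_setOfPred_linearIndependent.preimage (continuous_pi fun o => ?_)
    cases o <;> simp only [Option.casesOn'] <;> fun_prop

namespace MeasureTheory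

theorem measurePreserving_transpose {m n X : Type*} [Fintype m] [Fintype n]
    [MeasurableSpace X] (μ : m → n → Measure X) [∀ i j, SigmaFinite (μ i j)] :
    MeasurePreserving (fun (A : m → n → X) j i => A i j)
      (Measure.pi fun i => Measure.pi fun j => μ i j)
      (Measure.pi fun j => Measure.pi fun i => μ i j) := by
  refine ⟨by fun_prop, (Measure.pi_eq_generateFrom (fun _ => generateFrom_pi)
    (fun _ => isPiSystem_pi)
    (fun j => Measure.FiniteSpanningSetsIn.pi fun i => (μ i j).toFiniteSpanningSetsIn) ?_).symm⟩
  intro s hs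
  choose t ht hst using hs
  have hpre : (fun (A : m → n → X) j i => A i j) ⁻¹' Set.univ.pi s
      = Set.univ.pi fun i => Set.univ.pi fun j => t j i := by
    ext A
    simp only [← hst, Set.mem_preimage, Set.mem_univ_pi]
    exact forall_comm
  rw [Measure.map_apply (by fun_prop) (MeasurableSet.univ_pi fun j => hst j ▸
    MeasurableSet.univ_pi fun i => ht j i trivial), hpre]
  simp only [Measure.pi_pi, ← hst]
  exact Finset.prod_comm

namespace Measure

theorem pi_eq_zero_of_forall_update {ι : Type*} [Fintype ι] [DecidableEq ι]
    {X : ι → Type*} [∀ i, MeasurableSpace (X i)] {μ : ∀ i, Measure (X i)}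
    [∀ i, SigmaFinite (μ i)] (j : ι) {s : Set (∀ i, X i)} (hs : MeasurableSet s)
    (h : ∀ x, μ j {t | Function.update x j t ∈ s} = 0) : Measure.pi μ s = 0 := by
  rcases s.eq_empty_or_nonempty with rfl | ⟨x, -⟩
  · exact measure_empty
  have hslice : (fun y => ∫⁻ t, s.indicator 1 (Function.update y j t) ∂μ j) = 0 := by
    funext y
    rw [Pi.zero_apply, ← h y]
    exact lintegral_indicator_one (hs.preimage (measurable_update y))
  rw [← lintegral_indicator_one hs, lintegral_eq_lmarginal_univ x,
    ← insert_erase (mem_univ j),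
    lmarginal_insert' _ (measurable_one.indicator hs) (notMem_erase j _), hslice]
  simp [lmarginal]

theorem pi_setOf_linearMap_eq_null {ι : Type*} [Fintype ι] {μ : ι → Measure ℝ}
    [∀ i, SigmaFinite (μ i)] [∀ i, NullSingletonClass (μ i)] {φ : (ι → ℝ) →ₗ[ℝ] ℝ}
    (hφ : φ ≠ 0) (a : ℝ) : Measure.pi μ {u | φ u = a} = 0 := by
  classical
  obtain ⟨k, hk⟩ : ∃ k, φ (Pi.single k 1) ≠ 0 := by
    by_contra! h
    exact hφ ((Pi.basisFun ℝ ι).ext fun k => by simpa using h k)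
  have hline : ∀ u r,
      φ (Function.update u k r) = φ (Function.update u k 0) + r * φ (Pi.single k 1) := by
    intro u r
    rw [← smul_eq_mul, ← map_smul, ← map_add]
    congr 1
    ext i
    rcases eq_or_ne i k with rfl | hik <;> simp [*]
  refine pi_eq_zero_of_forall_update k
    (isClosed_eq φ.continuous_of_finiteDimensional continuous_const).measurableSet
    fun u => Set.Subsingleton.measure_zero (fun r hr t ht => ?_) _
  rw [Set.mem_ofPred_eq, Set.mem_ofPred_eq, hline] at hr ht
  exact mul_right_cancel₀ hk (by linarith)

theorem pi_setOf_smul_add_mem_null {ι : Type*} [Fintype ι] {μ : ι → Measure ℝ}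
    [∀ i, SigmaFinite (μ i)] [∀ i, NullSingletonClass (μ i)] {W : Submodule ℝ (ι → ℝ)}
    (hW : W ≠ ⊤) {c : ℝ} (hc : c ≠ 0) (w : ι → ℝ) :
    Measure.pi μ {u | c • u + w ∈ W} = 0 := by
  obtain ⟨φ, hφ, hWφ⟩ := W.exists_le_ker_of_lt_top hW.lt_top
  refine measure_mono_null (fun u hu => ?_) (pi_setOf_linearMap_eq_null hφ (-φ w / c))
  have : c * φ u + φ w = 0 := by simpa using hWφ hu
  simp only [Set.mem_ofPred_eq]
  field_simp
  linarith

variable {ι κ : Type*} [Fintype ι] [Fintype κ] {μ : ι → κ → Measure ℝ}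
  [∀ i m, SigmaFinite (μ i m)] [∀ i m, NullSingletonClass (μ i m)]

theorem pi_pi_setOf_sum_smul_mem_span_null {c : ι → ℝ} {j : ι} (hj : c j ≠ 0) {S : Finset ι}
    (hjS : j ∉ S) (hS : #S < Fintype.card κ) :
    Measure.pi (fun i => Measure.pi (μ i))
      {v : ι → κ → ℝ | ∑ i, c i • v i ∈ Submodule.span ℝ (v '' S)} = 0 := by
  classical
  have hmeas : MeasurableSet {v : ι → κ → ℝ | ∑ i, c i • v i ∈ Submodule.span ℝ (v '' S)} := by
    simp only [Set.image_eq_range]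
    exact measurableSet_setOf_mem_span (by fun_prop) (by fun_prop)
  refine pi_eq_zero_of_forall_update j hmeas fun v => ?_
  have himage : ∀ u, Function.update v j u '' S = v '' S := fun u =>
    Set.image_congr fun i hi => Function.update_of_ne (ne_of_mem_of_not_mem hi hjS) u v
  have hsum : ∀ u, ∑ i, c i • Function.update v j u i
      = c j • u + ∑ i ∈ univ.erase j, c i • v i := fun u => by
    rw [← add_sum_erase _ _ (mem_univ j), Function.update_self]
    congr 1
    exact Finset.sum_congr rfl fun i hi => by rw [Function.update_of_ne (ne_of_mem_erase hi)]
  simp only [Set.mem_ofPred_eq, hsum, himage]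
  exact pi_setOf_smul_add_mem_null (Submodule.span_image_ne_top_of_card_lt v hS) hj _

theorem pi_pi_setOf_exists_sum_smul_mem_span_null [DecidableEq ι] (y : ι → ℝ) :
    Measure.pi (fun i => Measure.pi (μ i))
      {v : ι → κ → ℝ | ∃ j, ∃ S : Finset ι, j ∉ S ∧ #S < Fintype.card κ ∧
        ∃ c ∈ ({y, Pi.single j 1} : Set (ι → ℝ)),
          c j ≠ 0 ∧ ∑ i, c i • v i ∈ Submodule.span ℝ (v '' S)} = 0 := by
  refine measure_mono_null (t := ⋃ (j) (S : Finset ι) (c ∈ ({y, Pi.single j 1} : Set (ι → ℝ)))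
      (_ : j ∉ S ∧ #S < Fintype.card κ ∧ c j ≠ 0),
      {v | ∑ i, c i • v i ∈ Submodule.span ℝ (v '' S)}) ?_ ?_
  · rintro v ⟨j, S, hjS, hS, c, hc, hcj, hv⟩
    simp only [Set.mem_iUnion]
    exact ⟨j, S, c, hc, ⟨hjS, hS, hcj⟩, hv⟩
  · exact measure_iUnion_null fun j => measure_iUnion_null fun S =>
      (measure_biUnion_null_iff (Set.toFinite _).countable).2 fun c _ =>
        measure_iUnion_null fun h => pi_pi_setOf_sum_smul_mem_span_null h.2.2 h.1 h.2.1

end Measure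

end MeasureTheory

theorem stmt3_general (M N : ℕ)
    (μ : Measure ℝ) [IsProbabilityMeasure μ] (hac : μ ≪ volume)
    (xstar : Fin N → ℝ) :
    (Measure.pi fun _ : Fin M => Measure.pi fun _ : Fin N => μ)
      {A : Fin M → Fin N → ℝ | ∀ x : Fin N → ℝ,
        Matrix.mulVec (Matrix.of A) x = Matrix.mulVec (Matrix.of A) xstar →
        sparsity x < M → x = xstar} = 1 := by
  classical
  have : NullSingletonClass μ := ⟨fun t => hac (measure_singleton t)⟩
  have hbad := Measure.pi_pi_setOf_exists_sum_smul_mem_span_null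
    (μ := fun (_ : Fin N) (_ : Fin M) => μ) xstar
  rw [measure_congr (ae_eq_univ.2 ?_), measure_univ]
  refine measure_mono_null (fun A hA => ?_)
    ((measurePreserving_transpose fun _ _ => μ).quasiMeasurePreserving.preimage_null hbad)
  simp only [Set.mem_compl_iff, Set.mem_ofPred_eq, not_forall] at hA
  obtain ⟨x, hAx, hsp, hne⟩ := hA
  simp only [Matrix.mulVec_eq_sum, op_smul_eq_smul] at hAx
  obtain ⟨j, S, hS, hjS, c, hc, hcj, hspan⟩ := exists_sum_smul_mem_span_of_sum_smul_eq
    (v := fun i m => A m i) hAx hne (T := univ.filter fun i => x i ≠ 0) (by simp)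
  exact ⟨j, S, hjS, by simpa using (card_le_card hS).trans_lt hsp, c, hc, hcj, hspan⟩

/-- For `x*` with at most `K < M` nonzero entries and a random `M × N`
matrix `A` (`M < N`) with i.i.d. absolutely continuous entries, with probability one
`x*` is the unique vector `x` with `A x = A x*` and fewer than `M` nonzero entries. -/
theorem stmt3 (M N K : ℕ) (hKM : K < M) (hMN : M < N)
    (μ : Measure ℝ) [IsProbabilityMeasure μ] (hac : μ ≪ volume)
    (xstar : Fin N → ℝ) (hx : sparsity xstar ≤ K) :
    (Measure.pi fun _ : Fin M => Measure.pi fun _ : Fin N => μ)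
      {A : Fin M → Fin N → ℝ | ∀ x : Fin N → ℝ,
        Matrix.mulVec (Matrix.of A) x = Matrix.mulVec (Matrix.of A) xstar →
        sparsity x < M → x = xstar} = 1 :=
  stmt3_general M N μ hac xstar
end

section
/- Let a ∈ {-1,1}^N be a random vector with i.i.d. equiprobable Bernoulli (±1) entries, and let W be a deterministic d-dimensional linear subspace of ℝ^N with 0 ≤ d < N. Then P(a ∈ W) ≤ 2^{d-N}. -/
/-!
A `d`-dimensional subspace `W ⊆ ℝ^N` is determined by `d` of its coordinates: the coordinate
functionals restricted to `W` separate points, so `d` of them form a basis of the dual of `W`,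
and a vector of `W` on which those `d` functionals vanish is zero. Hence at most `2^d` sign
vectors lie in `W`, and each sign vector has probability `2^(-N)`.
-/

open MeasureTheory
open scoped ENNReal

noncomputable def bernoulliPM : Measure ℝ :=
  (2 : ℝ≥0∞)⁻¹ • Measure.dirac (-1) + (2 : ℝ≥0∞)⁻¹ • Measure.dirac 1

open Finset Module

section Coordinates

variable {K ι : Type*} [Field K] [Fintype ι]

theorem Submodule.exists_card_eq_finrank_injOn_restrict (W : Submodule K (ι → K)) :
    ∃ s : Finset ι, #s = finrank K W ∧ Set.InjOn s.restrict (W : Set (ι → K)) := by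
  classical
  let v : ι → Dual K W := fun i => LinearMap.proj i ∘ₗ W.subtype
  obtain ⟨b, -, -, hspan, hli⟩ :=
    exists_linearIndepOn_extension (linearIndepOn_empty K v) (Set.empty_subset Set.univ)
  let r : W →ₗ[K] b.toFinset → K := LinearMap.pi fun i => v i
  have hr : Function.Injective r := by
    rw [← LinearMap.ker_eq_bot, eq_bot_iff]
    intro x hx
    have hvx : span K (v '' b) ≤ LinearMap.ker (Dual.eval K W x) := by
      rw [Submodule.span_le]
      rintro - ⟨i, hi, rfl⟩
      exact congrFun hx ⟨i, by simpa using hi⟩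
    exact Subtype.ext <| funext fun i => hvx (hspan ⟨i, trivial, rfl⟩)
  refine ⟨b.toFinset, le_antisymm ?_ ?_, ?_⟩
  · simpa [Subspace.dual_finrank_eq] using hli.fintype_card_le_finrank
  · simpa using LinearMap.finrank_le_finrank_of_injective hr
  · intro x hx y hy hxy
    simpa using hr (a₁ := ⟨x, hx⟩) (a₂ := ⟨y, hy⟩) hxy

theorem Submodule.card_filter_piFinset_mem_le [DecidableEq ι] (W : Submodule K (ι → K))
    [DecidablePred (· ∈ W)] (S : Finset K) :
    #{x ∈ Fintype.piFinset fun _ => S | x ∈ W} ≤ #S ^ finrank K W := by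
  obtain ⟨s, hs, hinj⟩ := W.exists_card_eq_finrank_injOn_restrict
  calc #{x ∈ Fintype.piFinset fun _ => S | x ∈ W}
      ≤ #(Fintype.piFinset fun _ : s => S) := by
        exact card_le_card_of_injOn s.restrict (fun x hx => by simp_all)
          (hinj.mono fun x hx => by simp_all)
    _ = #S ^ finrank K W := by simp [hs]

end Coordinates

theorem MeasureTheory.Measure.pi_le_pow_mul_card_filter_piFinset {α ι : Type*}
    [MeasurableSpace α] [Fintype ι] [DecidableEq ι] (μ : Measure α) [SigmaFinite μ]
    (S : Finset α) (hS : μ (↑S)ᶜ = 0) {c : ℝ≥0∞} (hc : ∀ a ∈ S, μ {a} ≤ c)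
    (A : Set (ι → α)) [DecidablePred (· ∈ A)] :
    Measure.pi (fun _ : ι => μ) A ≤
      c ^ Fintype.card ι * #{x ∈ Fintype.piFinset fun _ => S | x ∈ A} := by
  set P := Fintype.piFinset fun _ : ι => S
  set ν := Measure.pi fun _ : ι => μ
  have hP : ν (↑P)ᶜ = 0 := by
    refine measure_mono_null (t := ⋃ i, Function.eval i ⁻¹' (↑S)ᶜ) (fun x hx => ?_)
      (measure_iUnion_null fun i => Measure.pi_eval_preimage_null _ hS)
    simpa [P, Fintype.coe_piFinset] using hx
  calc ν A ≤ ν (⋃ x ∈ P.filter (· ∈ A), {x}) + ν (↑P)ᶜ := by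
        refine (measure_union_le _ _).trans' (measure_mono fun x hx => ?_)
        by_cases x ∈ P <;> simp_all
    _ ≤ ∑ x ∈ P.filter (· ∈ A), c ^ Fintype.card ι := by
        rw [hP, add_zero]
        refine (measure_biUnion_finset_le _ _).trans (sum_le_sum fun x hx => ?_)
        rw [Measure.pi_singleton, ← card_univ]
        refine prod_le_pow_card _ _ _ fun i _ => hc _ ?_
        simp_all [P]
    _ = _ := by rw [sum_const, nsmul_eq_mul, mul_comm]

instance : IsProbabilityMeasure bernoulliPM :=
  ⟨by simp [bernoulliPM, ENNReal.inv_two_add_inv_two]⟩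

theorem bernoulliPM_compl_pair : bernoulliPM (↑({-1, 1} : Finset ℝ))ᶜ = 0 := by
  simp [bernoulliPM]

theorem bernoulliPM_singleton {a : ℝ} (ha : a ∈ ({-1, 1} : Finset ℝ)) :
    bernoulliPM {a} = 2⁻¹ := by
  rw [mem_insert, mem_singleton] at ha
  rcases ha with rfl | rfl <;> norm_num [bernoulliPM]

theorem stmt4_general (N d : ℕ) (W : Submodule ℝ (Fin N → ℝ))
    (hW : Module.finrank ℝ W = d) :
    (Measure.pi fun _ : Fin N => bernoulliPM) (W : Set (Fin N → ℝ))
      ≤ (2 : ℝ≥0∞) ^ ((d : ℤ) - (N : ℤ)) := by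
  classical
  have hcube : #({-1, 1} : Finset ℝ) = 2 := card_pair (by norm_num)
  calc (Measure.pi fun _ : Fin N => bernoulliPM) (W : Set (Fin N → ℝ))
      ≤ 2⁻¹ ^ N * #{x ∈ Fintype.piFinset fun _ => {-1, 1} | x ∈ W} := by
        simpa using Measure.pi_le_pow_mul_card_filter_piFinset bernoulliPM _
          bernoulliPM_compl_pair (fun _ ha => (bernoulliPM_singleton ha).le)
          (W : Set (Fin N → ℝ))
    _ ≤ 2⁻¹ ^ N * 2 ^ d := by
        gcongr
        have hcount := W.card_filter_piFinset_mem_le {-1, 1}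
        rw [hW, hcube] at hcount
        exact_mod_cast hcount
    _ = 2 ^ ((d : ℤ) - (N : ℤ)) := by
        rw [ENNReal.zpow_sub (by norm_num) (by norm_num), zpow_natCast, zpow_natCast,
          ENNReal.inv_pow, mul_comm]

/-- Tao–Vu lemma: a random vector with i.i.d. `±1` entries lies in a fixed
`d`-dimensional subspace `W` of `ℝ^N` (`d < N`) with probability at most `2^(d-N)`. -/
theorem stmt4 (N d : ℕ) (hdN : d < N) (W : Submodule ℝ (Fin N → ℝ))
    (hW : Module.finrank ℝ W = d) :
    (Measure.pi fun _ : Fin N => bernoulliPM) (W : Set (Fin N → ℝ))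
      ≤ (2 : ℝ≥0∞) ^ ((d : ℤ) - (N : ℤ)) :=
  stmt4_general N d W hW
end
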